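/- arXiv:1702.02681 — 8 statements merged into one kernel-verified Lean document; each statement's English description precedes it below -/
import Mathlib

section
/- Let [2] denote the linear order with three elements 0 < 1 < 2, regarded as a category. The inclusion of the full subcategory on the non-consecutive subset {0, 2} into [2] (the functor induced by the monotone map sending 0 ↦ 0 and 1 ↦ 2), regarded as a morphism in Cat, is NOT exponentiable: the base-change functor Over.pullback along it does not admit a right adjoint. -/
/-!
Let `[2]` denote the linear order with three elements `0 < 1 < 2` (the category `Fin 3`).
The inclusion of the full subcategory on the non-consecutive subset `{0, 2}` into `[2]`, i.e. the
functor `Fin 2 ⥤ Fin 3` induced by the monotone map sending `0 ↦ 0` and `1 ↦ 2`, regarded as a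
morphism in `Cat`, is NOT exponentiable: the base-change functor `Over.pullback` along it does
not admit a right adjoint.
-/

open CategoryTheory

/-- The monotone map `Fin 2 → Fin 3` sending `0 ↦ 0` and `1 ↦ 2`. -/
def endpointsMonotone : Monotone (fun k : Fin 2 => (⟨2 * k.1, by omega⟩ : Fin 3)) := by
  intro a b hab
  simp only [Fin.mk_le_mk]
  omega

/-- The inclusion functor `{0 < 2} ↪ [2]`, i.e. `Fin 2 ⥤ Fin 3`, `0 ↦ 0`, `1 ↦ 2`. -/
def endpointsInclusion : Fin 2 ⥤ Fin 3 :=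
  endpointsMonotone.functor

/-!
Base change along an exponentiable morphism is a left adjoint, so it preserves epimorphisms.
The functor `[1] ⊔ [1] ⥤ [2]` covering the two edges `0 → 1 → 2` is an epimorphism in `Cat`,
since a functor out of `[2]` is determined by its restrictions to these edges. Its pullback along
`{0 < 2} ↪ [2]` is discrete: only the vertices `0` and `2` lie over the endpoints, and they sit
in different components. A functor from a discrete category to `{0 < 2}` misses the arrow
`0 → 2`, so it is not an epimorphism.
-/

namespace CategoryTheory

open Limits

theorem epi_pullback_snd_of_isLeftAdjoint {C : Type*} [Category C] [HasPullbacks C]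
    [HasPushouts C] {X Y Z : C} (f : X ⟶ Y) [(Over.pullback f).IsLeftAdjoint] (g : Z ⟶ Y)
    [Epi g] : Epi (pullback.snd g f) := by
  let u : Over.mk g ⟶ Over.mk (𝟙 Y) := Over.homMk g
  have : Epi u.left := ‹Epi g›
  have : Epi u := Over.epi_of_epi_left u
  have : Epi ((Over.pullback f).map u).left := Over.epi_left_of_epi _
  have hw := Over.w ((Over.pullback f).map u)
  simp only [Over.pullback_obj_hom, Over.mk_hom] at hw
  rw [← hw]
  have : IsIso (pullback.snd (𝟙 Y) f) := inferInstance
  exact epi_comp _ _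

def Functor.toDiscreteOfObjEq {Q C : Type*} [Category Q] [Category C] (F : Q ⥤ C)
    (hF : ∀ {s t : Q} (_ : s ⟶ t), F.obj s = F.obj t) : Q ⥤ Discrete C where
  obj s := ⟨F.obj s⟩
  map f := Discrete.eqToHom (hF f)

theorem not_epi_discreteFunctor_id :
    ¬ Epi (Discrete.functor id : Discrete (Fin 2) ⥤ Fin 2).toCatHom := by
  intro h
  let left : Fin 2 ⥤ WalkingParallelPair := ComposableArrows.mk₁ WalkingParallelPairHom.left
  let right : Fin 2 ⥤ WalkingParallelPair := ComposableArrows.mk₁ WalkingParallelPairHom.right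
  have hne : left ≠ right := by
    intro heq
    have := Functor.congr_hom heq (homOfLE (by decide : (0 : Fin 2) ≤ 1))
    cases this
  refine hne (congrArg Cat.Hom.toFunctor (h.left_cancellation left.toCatHom right.toCatHom ?_))
  exact Cat.Hom.ext (Discrete.functor_ext fun i => by fin_cases i <;> rfl)

theorem not_epi_of_obj_eq_of_hom {Q : Type} [SmallCategory Q] (F : Q ⥤ Fin 2)
    (hF : ∀ {s t : Q} (_ : s ⟶ t), F.obj s = F.obj t) : ¬ Epi F.toCatHom := by
  intro _
  have hfac : (F.toDiscreteOfObjEq hF ⋙ Discrete.functor id).toCatHom = F.toCatHom :=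
    congrArg Functor.toCatHom (Functor.ext (fun _ => rfl) (fun _ _ _ => Subsingleton.elim _ _))
  exact not_epi_discreteFunctor_id (epi_of_epi_fac (f := (F.toDiscreteOfObjEq hF).toCatHom) hfac)

def spineCover : Fin 2 ⊕ Fin 2 ⥤ Fin 3 :=
  Fin.castSuccOrderEmb.monotone.functor.sum' (Fin.succOrderEmb 2).monotone.functor

theorem epi_spineCover : Epi spineCover.toCatHom := by
  refine ⟨fun {Z} G H h => Cat.Hom.ext ?_⟩
  replace h : spineCover ⋙ G.toFunctor = spineCover ⋙ H.toFunctor :=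
    congrArg Cat.Hom.toFunctor h
  refine ComposableArrows.ext₂ (Functor.congr_obj h (.inl 0)) (Functor.congr_obj h (.inl 1))
    (Functor.congr_obj h (.inr 1)) ?_ ?_
  · exact Functor.congr_hom h ((Sum.inl_ _ _).map (homOfLE (by decide) : (0 : Fin 2) ⟶ 1))
  · exact Functor.congr_hom h ((Sum.inr_ _ _).map (homOfLE (by decide) : (0 : Fin 2) ⟶ 1))

theorem eq_of_hom_of_spineCover_obj_eq {x y : Fin 2 ⊕ Fin 2} (f : x ⟶ y) {k l : Fin 2}
    (hx : spineCover.obj x = endpointsInclusion.obj k)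
    (hy : spineCover.obj y = endpointsInclusion.obj l) : k = l := by
  have hk := k.isLt
  have hl := l.isLt
  rcases x with i | i <;> rcases y with j | j
  · have hi : (i : ℕ) = 2 * k := congrArg Fin.val hx
    have hj : (j : ℕ) = 2 * l := congrArg Fin.val hy
    have hij : i ≤ j := leOfHom f.down
    omega
  · nomatch f
  · nomatch f
  · have hi : (i : ℕ) + 1 = 2 * k := congrArg Fin.val hx
    have hj : (j : ℕ) + 1 = 2 * l := congrArg Fin.val hy
    have hij : i ≤ j := leOfHom f.down
    omega

theorem obj_eq_of_hom_of_comp_spineCover_eq {Q : Cat} (a : Q ⟶ Cat.of (Fin 2 ⊕ Fin 2))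
    (b : Q ⟶ Cat.of (Fin 2)) (w : a ≫ spineCover.toCatHom = b ≫ endpointsInclusion.toCatHom)
    {s t : Q} (f : s ⟶ t) : b.toFunctor.obj s = b.toFunctor.obj t :=
  have hw : a.toFunctor ⋙ spineCover = b.toFunctor ⋙ endpointsInclusion :=
    congrArg Cat.Hom.toFunctor w
  eq_of_hom_of_spineCover_obj_eq (a.toFunctor.map f) (Functor.congr_obj hw s)
    (Functor.congr_obj hw t)

end CategoryTheory

open Limits

theorem endpointsInclusion_not_exponentiable :
    ¬ (Over.pullback
        (show Cat.of (Fin 2) ⟶ Cat.of (Fin 3) from endpointsInclusion.toCatHom)).IsLeftAdjoint := by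
  intro _
  have : Epi spineCover.toCatHom := epi_spineCover
  exact not_epi_of_obj_eq_of_hom _ (obj_eq_of_hom_of_comp_spineCover_eq _ _ pullback.condition)
    (epi_pullback_snd_of_isLeftAdjoint _ spineCover.toCatHom)
end

section
/- Let I denote the linear order with two elements 0 < 1, regarded as a category, and let p : E ⥤ I be a functor. Then p is a fibered category (Grothendieck fibration) if and only if the inclusion functor of the fiber of p over 0 into E admits a right adjoint (i.e., the fiber inclusion Fiber p 0 ⥤ E is a left adjoint). -/
/-!
Over a thin base every morphism with the right endpoints is a lift, and `0` is minimal in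
`Fin 2`, so a morphism `φ : b ⟶ a` with `p b = 0` is strongly cartesian exactly when every
morphism into `a` from the fiber over `0` factors uniquely through `φ`, that is, when `(b, φ)` is
terminal in the comma category `fiberInclusion ↓ a`. The only other morphisms of `Fin 2` are
identities, whose identity lifts are strongly cartesian; and terminal objects of all the comma
categories `fiberInclusion ↓ a` amount to a right adjoint of the fiber inclusion.
-/

universe v u

open CategoryTheory CategoryTheory.Functor CategoryTheory.Limits

namespace CategoryTheory.Functor

variable {E : Type u} [Category.{v} E]

lemma IsHomLift.of_isThin {K : Type*} [Category K] [Quiver.IsThin K] (p : E ⥤ K) {R S : K}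
    (f : R ⟶ S) {a b : E} (φ : a ⟶ b) (ha : p.obj a = R) (hb : p.obj b = S) :
    p.IsHomLift f φ :=
  IsHomLift.of_fac p f φ ha hb (Subsingleton.elim _ _)

namespace IsStronglyCartesian

noncomputable def isTerminalCostructuredArrowMk {K : Type*} [Category K] [Quiver.IsThin K]
    (p : E ⥤ K) {x : K} {a b : E} (hb : p.obj b = x) (f : x ⟶ p.obj a) (φ : b ⟶ a)
    [p.IsStronglyCartesian f φ] :
    IsTerminal (CostructuredArrow.mk (Y := Fiber.mk hb) (S := Fiber.fiberInclusion) φ) := by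
  refine IsTerminal.ofUniqueHom (fun Y => ?_) fun Y m => ?_
  all_goals
    let ψ : Y.left.1 ⟶ a := Y.hom
    have : p.IsHomLift f ψ := IsHomLift.of_isThin p _ _ Y.left.2 rfl
  · exact CostructuredArrow.homMk ⟨_, map_isHomLift p f φ (Category.id_comp f).symm ψ⟩
      (fac p f φ (Category.id_comp f).symm ψ)
  · let χ : Y.left.1 ⟶ b := m.left.1
    have : p.IsHomLift (𝟙 x) χ := m.left.2
    ext
    exact map_uniq p f φ (Category.id_comp f).symm ψ χ (CostructuredArrow.w m)

lemma of_isTerminal {K : Type*} [PartialOrder K] (p : E ⥤ K) {x : K} (hx : IsMin x) {a : E}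
    {T : CostructuredArrow (Fiber.fiberInclusion : Fiber p x ⥤ E) a} (hT : IsTerminal T)
    (f : x ⟶ p.obj a) : p.IsStronglyCartesian f (T.hom : T.left.1 ⟶ a) where
  toIsHomLift := IsHomLift.of_isThin p _ _ T.left.2 rfl
  universal_property' {a'} g φ' _ := by
    have ha' : p.obj a' = x := hx.eq_of_le (leOfHom g)
    let Y := CostructuredArrow.mk (Y := Fiber.mk ha') (S := Fiber.fiberInclusion) φ'
    refine ⟨(hT.from Y).left.1,
      ⟨IsHomLift.of_isThin p _ _ rfl T.left.2, CostructuredArrow.w (hT.from Y)⟩, ?_⟩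
    rintro χ ⟨-, hχ⟩
    let χ' : Y ⟶ T := CostructuredArrow.homMk ⟨χ, IsHomLift.of_isThin p _ _ ha' T.left.2⟩ hχ
    exact congrArg (fun m => m.left.1) (hT.hom_ext χ' (hT.from Y))

end IsStronglyCartesian

lemma IsFibered.of_exists_isStronglyCartesian_from_zero (p : E ⥤ Fin 2)
    (h : ∀ (a : E) (f : 0 ⟶ p.obj a), ∃ (b : E) (φ : b ⟶ a), p.IsStronglyCartesian f φ) :
    p.IsFibered := by
  refine IsFibered.of_exists_isStronglyCartesian fun a R f => ?_
  rcases (leOfHom f).lt_or_eq with hR | rfl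
  · obtain rfl : R = 0 := by omega
    exact h a f
  · obtain rfl : f = 𝟙 _ := Subsingleton.elim _ _
    exact ⟨a, 𝟙 a, inferInstance⟩

end CategoryTheory.Functor

theorem isFibered_iff_fiberInclusion_isLeftAdjoint {E : Type u} [Category.{v} E]
    (p : E ⥤ Fin 2) :
    p.IsFibered ↔ (Fiber.fiberInclusion : Fiber p 0 ⥤ E).IsLeftAdjoint := by
  rw [isLeftAdjoint_iff_hasTerminal_costructuredArrow]
  constructor
  · intro _ a
    let f : 0 ⟶ p.obj a := homOfLE (Fin.zero_le _)
    obtain ⟨b, φ, _⟩ := IsPreFibered.exists_isCartesian p rfl f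
    exact (IsStronglyCartesian.isTerminalCostructuredArrowMk p
      (IsHomLift.domain_eq p f φ) f φ).hasTerminal
  · intro _
    exact IsFibered.of_exists_isStronglyCartesian_from_zero p fun a f =>
      ⟨_, _, IsStronglyCartesian.of_isTerminal p isMin_bot terminalIsTerminal f⟩
end

section
/- Let p : E ⥤ K be a functor. Then p is pre-fibered (every morphism f : x ⟶ p.obj e of K admits a cartesian lift with target e, in the weak sense) if and only if for every object x of K the canonical functor from the fiber of p over x to the comma category StructuredArrow x p, sending an object e with p.obj e = x to the pair (e, 𝟙 x : x ⟶ p.obj e), admits a right adjoint (i.e., is a left adjoint). -/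
/-!
Let `p : E ⥤ K` be a functor.  Then `p` is pre-fibered (every morphism `f : x ⟶ p.obj e` of `K`
admits a cartesian lift with target `e`, in the weak sense) if and only if for every object `x`
of `K` the canonical functor from the fiber of `p` over `x` to the comma category
`StructuredArrow x p`, sending an object `e` with `p.obj e = x` to the pair
`(e, 𝟙 x : x ⟶ p.obj e)`, admits a right adjoint (i.e. is a left adjoint).
-/

universe v₁ v₂ u₁ u₂

open CategoryTheory CategoryTheory.Functor

/-- The canonical functor from the fiber of `p` over `x` to the comma category
`StructuredArrow x p`, sending an object `e` with `p.obj e = x` to `(e, 𝟙 x : x ⟶ p.obj e)`. -/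
def fiberToStructuredArrow {E : Type u₁} {K : Type u₂} [Category.{v₁} E] [Category.{v₂} K]
    (p : E ⥤ K) (x : K) : Fiber p x ⥤ StructuredArrow x p where
  obj e := StructuredArrow.mk (Y := e.1) (eqToHom e.2.symm)
  map {a b} φ := StructuredArrow.homMk φ.1 (by
    haveI := φ.2
    rw [IsHomLift.fac' p (𝟙 x) φ.1]
    simp)

/-!
An object of `CostructuredArrow (fiberToStructuredArrow p x) T` is a morphism `φ : b ⟶ T.right`
lying over `T.hom` with `b` in the fiber over `x`, and a morphism from `φ` to `φ'` is a morphism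
`χ` of the fiber with `χ ≫ φ' = φ`. So `φ` is terminal exactly when it is cartesian, and the
theorem follows from the characterisation of left adjoints by terminal objects of costructured
arrow categories.
-/

namespace fiberToStructuredArrow

open Limits

variable {E : Type u₁} {K : Type u₂} [Category.{v₁} E] [Category.{v₂} K] {p : E ⥤ K} {x : K}
  {T : StructuredArrow x p}

instance isHomLift_right {a : Fiber p x} (m : (fiberToStructuredArrow p x).obj a ⟶ T) :
    p.IsHomLift T.hom m.right := by
  apply IsHomLift.of_fac' p T.hom m.right a.2 rfl
  rw [← StructuredArrow.w m]
  simp [fiberToStructuredArrow]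

instance isHomLift_map_right {a b : Fiber p x} (χ : a ⟶ b) :
    p.IsHomLift (𝟙 x) ((fiberToStructuredArrow p x).map χ).right :=
  χ.2

def homOfIsHomLift {a : Fiber p x} (φ : a.1 ⟶ T.right) (hφ : p.IsHomLift T.hom φ) :
    (fiberToStructuredArrow p x).obj a ⟶ T :=
  StructuredArrow.homMk φ (by simp [fiberToStructuredArrow, IsHomLift.fac' p T.hom φ])

section CostructuredArrow

variable {Y Y' : CostructuredArrow (fiberToStructuredArrow p x) T}

lemma costructuredArrow_w_right (m : Y' ⟶ Y) :
    ((fiberToStructuredArrow p x).map m.left).right ≫ Y.hom.right = Y'.hom.right :=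
  congr_arg CommaMorphism.right (CostructuredArrow.w m)

def costructuredArrowHomMk (χ : Y'.left ⟶ Y.left) (w : χ.1 ≫ Y.hom.right = Y'.hom.right) :
    Y' ⟶ Y :=
  CostructuredArrow.homMk χ (StructuredArrow.hom_ext _ _ w)

noncomputable def isTerminalOfIsCartesian (hY : p.IsCartesian T.hom Y.hom.right) :
    IsTerminal Y :=
  IsTerminal.ofUniqueHom
    (fun Y' => costructuredArrowHomMk
      (Fiber.homMk p x (IsCartesian.map p T.hom Y.hom.right Y'.hom.right))
      (IsCartesian.fac p T.hom Y.hom.right Y'.hom.right))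
    (fun Y' m => by
      ext
      exact IsCartesian.map_uniq p T.hom Y.hom.right Y'.hom.right
        ((fiberToStructuredArrow p x).map m.left).right (costructuredArrow_w_right m))

lemma isCartesian_of_isTerminal (hY : IsTerminal Y) : p.IsCartesian T.hom Y.hom.right where
  universal_property := by
    intro a' φ' hφ'
    let Y' := CostructuredArrow.mk
      (homOfIsHomLift (a := Fiber.mk (IsHomLift.domain_eq p T.hom φ')) φ' hφ')
    refine ⟨(hY.from Y').left.1, ⟨(hY.from Y').left.2, costructuredArrow_w_right (hY.from Y')⟩, ?_⟩
    rintro ψ ⟨hψ, hψφ⟩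
    exact congr_arg (fun m : Y' ⟶ Y => m.left.1)
      (hY.hom_ext (costructuredArrowHomMk ⟨ψ, hψ⟩ hψφ) (hY.from Y'))

end CostructuredArrow

lemma hasTerminal_costructuredArrow_of_isCartesian {b : E} (φ : b ⟶ T.right)
    (hφ : p.IsCartesian T.hom φ) : HasTerminal (CostructuredArrow (fiberToStructuredArrow p x) T) :=
  let Y := CostructuredArrow.mk
    (homOfIsHomLift (a := Fiber.mk (IsHomLift.domain_eq p T.hom φ)) φ hφ.toIsHomLift)
  (isTerminalOfIsCartesian (Y := Y) hφ).hasTerminal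

end fiberToStructuredArrow

open fiberToStructuredArrow in
theorem isPreFibered_iff_fiberToStructuredArrow_isLeftAdjoint
    {E : Type u₁} {K : Type u₂} [Category.{v₁} E] [Category.{v₂} K] (p : E ⥤ K) :
    p.IsPreFibered ↔ ∀ x : K, (fiberToStructuredArrow p x).IsLeftAdjoint := by
  simp only [isLeftAdjoint_iff_hasTerminal_costructuredArrow]
  constructor
  · intro _ x T
    obtain ⟨b, φ, hφ⟩ := IsPreFibered.exists_isCartesian' T.hom
    exact hasTerminal_costructuredArrow_of_isCartesian φ hφ
  · intro _
    exact ⟨fun f => ⟨_, _, isCartesian_of_isTerminal (T := StructuredArrow.mk f)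
      Limits.terminalIsTerminal⟩⟩
end

section
/- Let p : E ⥤ K be a functor between small categories and let [2] denote the linear order 0 < 1 < 2, regarded as a category. Then p is a fibered category (Grothendieck fibration) if and only if for every functor u : [2] ⥤ K, the projection to [2] of the strict pullback of p along u (the category of pairs (i, e) with i an object of [2] and e an object of E satisfying u.obj i = p.obj e, with morphisms pairs of morphisms with matching images) is a fibered category. -/
/-!
Let `p : E ⥤ K` be a functor between small categories and let `[2]` denote the linear order
`0 < 1 < 2` (the category `Fin 3`).  Then `p` is a fibered category (Grothendieck fibration) if
and only if for every functor `u : [2] ⥤ K`, the projection to `[2]` of the strict pullback of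
`p` along `u` (the category of pairs `(i, e)` with `u.obj i = p.obj e`, with morphisms pairs of
morphisms with matching images) is a fibered category.
-/

universe v₁ v₂ v₃ u₁ u₂ u₃

open CategoryTheory CategoryTheory.Functor

/-- The strict pullback of a functor `p : E ⥤ K` along a functor `u : J ⥤ K`:
its objects are pairs `(i, e)` with `u.obj i = p.obj e`, and its morphisms are pairs of
morphisms with matching images. -/
structure CatStrictPullback {J : Type u₁} {K : Type u₂} {E : Type u₃}
    [Category.{v₁} J] [Category.{v₂} K] [Category.{v₃} E]
    (u : J ⥤ K) (p : E ⥤ K) : Type max u₁ u₃ where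
  base : J
  total : E
  w : u.obj base = p.obj total

namespace CatStrictPullback

variable {J : Type u₁} {K : Type u₂} {E : Type u₃}
    [Category.{v₁} J] [Category.{v₂} K] [Category.{v₃} E]
    (u : J ⥤ K) (p : E ⥤ K)

instance : Category (CatStrictPullback u p) where
  Hom a b := { fg : (a.base ⟶ b.base) × (a.total ⟶ b.total) //
      u.map fg.1 ≫ eqToHom b.w = eqToHom a.w ≫ p.map fg.2 }
  id a := ⟨⟨𝟙 a.base, 𝟙 a.total⟩, by simp⟩
  comp f g := ⟨⟨f.1.1 ≫ g.1.1, f.1.2 ≫ g.1.2⟩, by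
    rw [Functor.map_comp, Functor.map_comp, Category.assoc, g.2, ← Category.assoc, f.2,
      Category.assoc]⟩
  id_comp f := by apply Subtype.ext; simp
  comp_id f := by apply Subtype.ext; simp
  assoc f g h := by apply Subtype.ext; simp

/-- The projection of the strict pullback of `p : E ⥤ K` along `u : J ⥤ K` to `J`. -/
def fst : CatStrictPullback u p ⥤ J where
  obj a := a.base
  map f := f.1.1

end CatStrictPullback

/-!
A morphism lying over `f` is strongly cartesian exactly when it is cartesian along every `g`, i.e.
universal among the morphisms lying over `g ≫ f`. In the strict pullback of `p` along
`mk₂ g f : [2] ⥤ K`, a strongly cartesian lift of `1 ⟶ 2` has as total component a cartesian lift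
of `f` that is moreover cartesian along `g`. Cartesian lifts of `f` are unique up to a vertical
isomorphism, which preserves being cartesian along `g`; hence the lift obtained for `g = 𝟙` is
cartesian along every `g`. Conversely, if `ψ` is strongly cartesian over `u.map f`, then `(f, ψ)`
is strongly cartesian in the strict pullback along `u`.
-/

namespace CategoryTheory.Functor

variable {K : Type u₂} {E : Type u₃} [Category.{v₂} K] [Category.{v₃} E] (p : E ⥤ K)

def IsCartesianAlong {R' R S : K} (g : R' ⟶ R) (f : R ⟶ S) {a b : E} (φ : a ⟶ b) : Prop :=
  ∀ ⦃a' : E⦄ (φ' : a' ⟶ b) [p.IsHomLift (g ≫ f) φ'],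
    ∃! χ : a' ⟶ a, p.IsHomLift g χ ∧ χ ≫ φ = φ'

namespace IsCartesianAlong

variable {p} {R' R S : K} {g : R' ⟶ R} {f : R ⟶ S} {a b : E} {φ : a ⟶ b}

lemma isCartesian [p.IsHomLift f φ] (h : p.IsCartesianAlong (𝟙 R) f φ) : p.IsCartesian f φ where
  universal_property φ' _ := h φ'

lemma of_isCartesian {a₀ : E} {ψ : a₀ ⟶ b} [p.IsCartesian f φ] [p.IsCartesian f ψ]
    (h : p.IsCartesianAlong g f ψ) : p.IsCartesianAlong g f φ := by
  intro a' φ' _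
  let e := IsCartesian.domainUniqueUpToIso p f φ ψ
  obtain ⟨χ, ⟨_, hχ⟩, hχ_uniq⟩ := h φ'
  refine ⟨χ ≫ e.hom, ⟨inferInstance, by simp [e, hχ]⟩, fun π ⟨_, hπ⟩ => ?_⟩
  rw [← Iso.comp_inv_eq]
  exact hχ_uniq _ ⟨inferInstance, by simp [e, hπ]⟩

end IsCartesianAlong

end CategoryTheory.Functor

namespace CatStrictPullback

open Functor

variable {J : Type u₁} {K : Type u₂} {E : Type u₃}
    [Category.{v₁} J] [Category.{v₂} K] [Category.{v₃} E]
    {u : J ⥤ K} {p : E ⥤ K}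

lemma hom_ext {a b : CatStrictPullback u p} {φ ψ : a ⟶ b} (h₁ : φ.1.1 = ψ.1.1)
    (h₂ : φ.1.2 = ψ.1.2) : φ = ψ :=
  Subtype.ext (Prod.ext h₁ h₂)

instance isHomLift_snd {a b : CatStrictPullback u p} (φ : a ⟶ b) :
    p.IsHomLift (u.map φ.1.1) φ.1.2 :=
  IsHomLift.of_fac' p _ _ a.w.symm b.w.symm (by simp [φ.2])

def homMk {a b : CatStrictPullback u p} (f : a.base ⟶ b.base) (φ : a.total ⟶ b.total)
    (hφ : p.IsHomLift (u.map f) φ) : a ⟶ b :=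
  ⟨(f, φ), by simp [IsHomLift.fac' p (u.map f) φ]⟩

lemma isHomLift_homMk {a b : CatStrictPullback u p} (f : a.base ⟶ b.base)
    (φ : a.total ⟶ b.total) (hφ : p.IsHomLift (u.map f) φ) :
    (fst u p).IsHomLift f (homMk f φ hφ) :=
  IsHomLift.map (fst u p) (homMk f φ hφ)

lemma base_eq_of_isHomLift {a b : CatStrictPullback u p} {f : a.base ⟶ b.base} {φ : a ⟶ b}
    (h : (fst u p).IsHomLift f φ) : φ.1.1 = f :=
  (@IsHomLift.eq_of_isHomLift _ _ _ _ (fst u p) a b f φ h).symm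

lemma isHomLift_snd_of_isHomLift {i j : J} (f : i ⟶ j) {a b : CatStrictPullback u p}
    (φ : a ⟶ b) [(fst u p).IsHomLift f φ] : p.IsHomLift (u.map f) φ.1.2 := by
  subst_hom_lift (fst u p) f φ
  exact isHomLift_snd φ

lemma isStronglyCartesian_homMk {a b : CatStrictPullback u p} (f : a.base ⟶ b.base)
    (ψ : a.total ⟶ b.total) [p.IsStronglyCartesian (u.map f) ψ] :
    (fst u p).IsStronglyCartesian f (homMk f ψ inferInstance) where
  toIsHomLift := isHomLift_homMk _ _ _
  universal_property' {c} (g : c.base ⟶ a.base) φ' hφ' := by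
    have hφ'g : φ'.1.1 = g ≫ f := base_eq_of_isHomLift hφ'
    obtain ⟨χ, ⟨hχ, hχψ⟩, hχ_uniq⟩ := IsStronglyCartesian.universal_property p (u.map f) ψ
      (u.map g) (u.map φ'.1.1) (by rw [hφ'g, u.map_comp]) φ'.1.2
    refine ⟨homMk g χ hχ, ⟨isHomLift_homMk (a := c) (b := a) g χ hχ, hom_ext hφ'g.symm hχψ⟩, ?_⟩
    rintro X ⟨hX, hXφ'⟩
    obtain rfl : X.1.1 = g := base_eq_of_isHomLift hX
    exact hom_ext rfl (hχ_uniq _ ⟨inferInstance, congrArg (·.1.2) hXφ'⟩)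

instance isFibered_fst [p.IsFibered] : (fst u p).IsFibered := by
  refine IsFibered.of_exists_isStronglyCartesian fun b i (f : i ⟶ b.base) => ?_
  obtain ⟨a, ψ, _⟩ := IsPreFibered.exists_isCartesian p b.w.symm (u.map f)
  let a' : CatStrictPullback u p := ⟨i, a, (IsHomLift.domain_eq p (u.map f) ψ).symm⟩
  exact ⟨a', _, isStronglyCartesian_homMk (a := a') f ψ⟩

lemma isCartesianAlong_snd {i j k : J} (g : i ⟶ j) (h : j ⟶ k) {b c : CatStrictPullback u p}
    (Φ : b ⟶ c) [(fst u p).IsStronglyCartesian h Φ] :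
    p.IsCartesianAlong (u.map g) (u.map h) Φ.1.2 := by
  subst_hom_lift (fst u p) h Φ
  intro a φ' hφ'
  let a' : CatStrictPullback u p :=
    ⟨i, a, (IsHomLift.domain_eq p (u.map g ≫ u.map ((fst u p).map Φ)) φ').symm⟩
  have hφ'' : p.IsHomLift (u.map (g ≫ (fst u p).map Φ)) φ' := by rw [u.map_comp]; exact hφ'
  have : (fst u p).IsHomLift (g ≫ (fst u p).map Φ) (homMk (a := a') (b := c) _ φ' hφ'') :=
    isHomLift_homMk _ _ _
  obtain ⟨X, ⟨hX, hXΦ⟩, hX_uniq⟩ := IsStronglyCartesian.universal_property (fst u p)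
    ((fst u p).map Φ) Φ g _ rfl (homMk (a := a') (b := c) _ φ' hφ'')
  have hXg : X.1.1 = g := base_eq_of_isHomLift hX
  refine ⟨X.1.2, ⟨hXg ▸ isHomLift_snd X, congrArg (·.1.2) hXΦ⟩, fun χ ⟨hχ, hχΦ⟩ => ?_⟩
  exact congrArg (·.1.2)
    (hX_uniq (homMk (a := a') g χ hχ) ⟨isHomLift_homMk _ _ _, hom_ext rfl hχΦ⟩)

lemma exists_isCartesian_isCartesianAlong {R' R : K} {a : E} (g : R' ⟶ R) (f : R ⟶ p.obj a)
    [(fst (ComposableArrows.mk₂ g f) p).IsFibered] :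
    ∃ (b : E) (ψ : b ⟶ a), p.IsCartesian f ψ ∧ p.IsCartesianAlong g f ψ := by
  let h₀₁ : (0 : Fin 3) ⟶ 1 := homOfLE (by decide)
  let h₁₂ : (1 : Fin 3) ⟶ 2 := homOfLE (by decide)
  obtain ⟨B, Φ, _⟩ := IsPreFibered.exists_isCartesian (fst (ComposableArrows.mk₂ g f) p)
    (a := ⟨2, a, rfl⟩) (S := 2) rfl h₁₂
  have : p.IsHomLift f Φ.1.2 := isHomLift_snd_of_isHomLift h₁₂ Φ
  have h₁ : p.IsCartesianAlong (𝟙 R) f Φ.1.2 := isCartesianAlong_snd (𝟙 1) h₁₂ Φ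
  exact ⟨_, Φ.1.2, h₁.isCartesian, isCartesianAlong_snd h₀₁ h₁₂ Φ⟩

end CatStrictPullback

theorem isFibered_iff_strict_pullbacks_over_two_isFibered
    {E K : Type u₁} [SmallCategory E] [SmallCategory K] (p : E ⥤ K) :
    p.IsFibered ↔ ∀ u : Fin 3 ⥤ K, (CatStrictPullback.fst u p).IsFibered := by
  refine ⟨fun _ _ => inferInstance, fun h => ?_⟩
  refine IsFibered.of_exists_isStronglyCartesian fun a R f => ?_
  obtain ⟨b, φ, _, -⟩ := CatStrictPullback.exists_isCartesian_isCartesianAlong (𝟙 R) f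
  refine ⟨b, φ, ⟨fun g φ' _ => ?_⟩⟩
  obtain ⟨_, _, _, hψ⟩ := CatStrictPullback.exists_isCartesian_isCartesianAlong g f
  exact hψ.of_isCartesian φ'
end

section
/- Let W be a class of morphisms (MorphismProperty) of a category C and let L : C ⥤ D be a localization functor of C with respect to W (Functor.IsLocalization). Then L is a final functor and an initial functor. -/
/-!
Every structured arrow `L.obj X ⟶ L.obj Y` is a zigzag of maps `L.map f` and inverses
`(L.map w)⁻¹` with `w ∈ W`; each such factor is itself a morphism (forwards or backwards) of
structured arrows, so the category of structured arrows under `L.obj X` is connected.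
Since `L` is essentially surjective this gives finality, and initiality follows by applying
it to the localization `L.op` of `Cᵒᵖ` with respect to `W.op`.
-/

universe v₁ v₂ u₁ u₂

open CategoryTheory

namespace CategoryTheory.Localization

variable {C : Type u₁} {D : Type u₂} [Category.{v₁} C] [Category.{v₂} D] (L : C ⥤ D)

lemma zigzag_structuredArrow_mk_id (W : MorphismProperty C) [L.IsLocalization W] {X : C}
    (g : StructuredArrow (L.obj X) L) :
    Zigzag (StructuredArrow.mk (𝟙 (L.obj X))) g := by
  induction g using induction_structuredArrow L W with
  | hP₀ => rfl
  | hP₁ f φ h => exact h.trans (Zigzag.of_hom (StructuredArrow.homMk f))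
  | hP₂ w hw φ h => exact h.trans (Zigzag.of_inv (StructuredArrow.homMk w (by simp)))

lemma isConnected_structuredArrow_obj (W : MorphismProperty C) [L.IsLocalization W] (X : C) :
    IsConnected (StructuredArrow (L.obj X) L) :=
  have : Nonempty (StructuredArrow (L.obj X) L) := ⟨StructuredArrow.mk (𝟙 (L.obj X))⟩
  zigzag_isConnected fun g₁ g₂ ↦
    (zigzag_structuredArrow_mk_id L W g₁).symm.trans (zigzag_structuredArrow_mk_id L W g₂)

lemma isConnected_structuredArrow (W : MorphismProperty C) [L.IsLocalization W] (d : D) :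
    IsConnected (StructuredArrow d L) :=
  have := essSurj L W
  have := isConnected_structuredArrow_obj L W (L.objPreimage d)
  isConnected_of_equivalent (StructuredArrow.mapIso (L.objObjPreimageIso d))

lemma final (W : MorphismProperty C) [L.IsLocalization W] : L.Final :=
  ⟨isConnected_structuredArrow L W⟩

lemma initial (W : MorphismProperty C) [L.IsLocalization W] : L.Initial :=
  have : L.op.Final := final L.op W.op
  Functor.initial_of_final_op L

end CategoryTheory.Localization

theorem localization_final_and_initial
    {C : Type u₁} {D : Type u₂} [Category.{v₁} C] [Category.{v₂} D]
    (W : MorphismProperty C) (L : C ⥤ D) [L.IsLocalization W] :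
    L.Final ∧ L.Initial :=
  ⟨Localization.final L W, Localization.initial L W⟩
end

section
/- Let F : C ⥤ Cat be a functor, G : C₀ ⥤ C a functor, Z a cocomplete category, and H : Grothendieck F ⥤ Z a functor. Writing q = Grothendieck.forget F and q₀ = Grothendieck.forget (G ⋙ F), one has q₀ ⋙ G = Grothendieck.pre F G ⋙ q, and the induced Beck–Chevalley natural transformation from the pointwise left Kan extension Lan_{q₀}((Grothendieck.pre F G) ⋙ H) to G ⋙ Lan_q H is a natural isomorphism of functors C₀ ⥤ Z. -/
/-!
The Beck–Chevalley map at `c₀ : C₀` compares the colimit of `pre F G ⋙ H` over the comma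
category `q₀ / c₀` with that of `H` over `q / G c₀`, so it is invertible as soon as the comparison
functor `q₀ / c₀ ⥤ q / G c₀` is final. Both comma categories receive the fiber
`F (G c₀)`, compatibly with the comparison functor, and each fiber inclusion is final because it
is a right adjoint: its left adjoint transports `(x, f : q x ⟶ c)` along `f`, i.e. uses the
coCartesian lifts of `q`. Since the comparison functor becomes final after precomposition with a
final functor, it is final itself.
-/

universe v u

open CategoryTheory CategoryTheory.Limits

namespace CategoryTheory.Functor

variable {A A₀ B B₀ Z : Type*} [Category* A] [Category* A₀] [Category* B] [Category* B₀]
  [Category* Z] {L : A ⥤ B} {L₀ : A₀ ⥤ B₀} {P : A₀ ⥤ A} {G : B₀ ⥤ B} {H : A ⥤ Z}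

def LeftExtension.baseChange (α : P ⋙ L ⟶ L₀ ⋙ G) (E : L.LeftExtension H) :
    L₀.LeftExtension (P ⋙ H) :=
  LeftExtension.mk (G ⋙ E.right) (whiskerLeft P E.hom ≫ whiskerRight α E.right)

noncomputable def LeftExtension.IsPointwiseLeftKanExtension.baseChange (α : P ⋙ L ⟶ L₀ ⋙ G)
    {E : L.LeftExtension H} (hE : E.IsPointwiseLeftKanExtension)
    [∀ b₀, (CostructuredArrow.map₂ α (𝟙 (G.obj b₀))).Final] :
    (E.baseChange α).IsPointwiseLeftKanExtension := fun b₀ =>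
  IsColimit.ofIsoColimit ((Final.isColimitWhiskerEquiv (CostructuredArrow.map₂ α (𝟙 _)) _).symm
    (hE (G.obj b₀))) (Cocone.ext (Iso.refl _) fun g => by
      simp only [comp_obj, Cocone.whisker_pt, Cocone.whisker_ι, whiskerLeft_app, coconeAt_ι_app,
        whiskeringLeft_obj_obj, CostructuredArrow.map₂_obj_left, const_obj_obj,
        CostructuredArrow.map₂_obj_hom, Category.comp_id, map_comp, Iso.refl_hom]
      erw [Category.comp_id, Category.assoc]
      rfl)

theorem isLeftKanExtension_comp_of_final [L.HasPointwiseLeftKanExtension H] {E : B ⥤ Z}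
    (e : H ⟶ L ⋙ E) [E.IsLeftKanExtension e] (α : P ⋙ L ⟶ L₀ ⋙ G)
    [∀ b₀, (CostructuredArrow.map₂ α (𝟙 (G.obj b₀))).Final]
    (β : P ⋙ H ⟶ L₀ ⋙ G ⋙ E) (hβ : β = whiskerLeft P e ≫ whiskerRight α E) :
    (G ⋙ E).IsLeftKanExtension β := by
  subst hβ
  exact ((isPointwiseLeftKanExtensionOfIsLeftKanExtension E e).baseChange α).isLeftKanExtension

end CategoryTheory.Functor

namespace CategoryTheory.Grothendieck

variable {C : Type*} [Category* C] {F : C ⥤ Cat}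

lemma toTransport_comp_ι_map (X : Grothendieck F) {c : C} (f : X.base ⟶ c) {a : F.obj c}
    (φ : (X.transport f).fiber ⟶ a) : X.toTransport f ≫ (ι F c).map φ = ⟨f, φ⟩ := by
  refine Grothendieck.ext _ _ (Category.comp_id f) ?_
  show _ ≫ eqToHom _ ≫ (F.map (𝟙 c)).toFunctor.map (𝟙 _) ≫ eqToHom _ ≫ φ = φ
  erw [(F.map (𝟙 c)).toFunctor.map_id, Category.id_comp, eqToHom_trans_assoc,
    eqToHom_trans_assoc]
  exact Category.id_comp φ

lemma toTransport_comp_ι_map_injective (X : Grothendieck F) {c : C} (f : X.base ⟶ c)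
    (a : F.obj c) :
    Function.Injective fun φ : (X.transport f).fiber ⟶ a => X.toTransport f ≫ (ι F c).map φ := by
  intro φ φ' h
  simp only [toTransport_comp_ι_map] at h
  exact (Grothendieck.congr h).trans (Category.id_comp φ')

lemma toTransport_comp_ι_map_eqToHom_comp_fiber (X : Grothendieck F) {c : C} (f : X.base ⟶ c)
    {a : F.obj c} (g : X ⟶ ⟨c, a⟩) (hg : g.base = f) :
    X.toTransport f ≫ (ι F c).map (eqToHom (by rw [← hg]) ≫ g.fiber) = g := by
  subst hg
  simp only [eqToHom_refl, Category.id_comp]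
  exact toTransport_comp_ι_map X g.base g.fiber

variable (F) in
def ιCostructuredArrow (c : C) : F.obj c ⥤ CostructuredArrow (forget F) c :=
  (ι F c).toCostructuredArrow (forget F) c (fun _ => 𝟙 c) (fun _ => Category.comp_id _)

variable {c : C}

def toTransportStructuredArrow (t : CostructuredArrow (forget F) c) :
    StructuredArrow t (ιCostructuredArrow F c) :=
  StructuredArrow.mk (Y := (t.left.transport t.hom).fiber)
    (CostructuredArrow.homMk (t.left.toTransport t.hom) (Category.comp_id _))

lemma structuredArrow_ιCostructuredArrow_hom_left_base {t : CostructuredArrow (forget F) c}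
    (y : StructuredArrow t (ιCostructuredArrow F c)) : y.hom.left.base = t.hom :=
  (Category.comp_id _).symm.trans (CostructuredArrow.w y.hom)

lemma toTransportStructuredArrow_hom_ext {t : CostructuredArrow (forget F) c}
    {y : StructuredArrow t (ιCostructuredArrow F c)} (m m' : toTransportStructuredArrow t ⟶ y) :
    m = m' :=
  StructuredArrow.hom_ext _ _ (toTransport_comp_ι_map_injective _ _ _
    (congrArg CommaMorphism.left (m.w.trans m'.w.symm)))

def isInitialToTransportStructuredArrow (t : CostructuredArrow (forget F) c) :
    IsInitial (toTransportStructuredArrow t) :=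
  IsInitial.ofUniqueHom
    (fun y => StructuredArrow.homMk _ (CostructuredArrow.hom_ext _ _
      (toTransport_comp_ι_map_eqToHom_comp_fiber _ _ _
        (structuredArrow_ιCostructuredArrow_hom_left_base y))))
    fun _ _ => toTransportStructuredArrow_hom_ext _ _

instance isRightAdjoint_ιCostructuredArrow (c : C) : (ιCostructuredArrow F c).IsRightAdjoint :=
  have := fun t => (isInitialToTransportStructuredArrow (F := F) (c := c) t).hasInitial
  isRightAdjointOfStructuredArrowInitials _

variable {C₀ : Type*} [Category* C₀]

lemma pre_map_ι_map (G : C₀ ⥤ C) {c₀ : C₀} {a b : (G ⋙ F).obj c₀} (φ : a ⟶ b) :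
    (pre F G).map ((ι (G ⋙ F) c₀).map φ) = (ι F (G.obj c₀)).map φ := by
  refine Grothendieck.ext _ _ (G.map_id c₀) ?_
  show _ ≫ eqToHom _ ≫ φ = eqToHom _ ≫ φ
  erw [eqToHom_trans_assoc]

def ιCostructuredArrowCompMap₂PreIso (G : C₀ ⥤ C) (c₀ : C₀) :
    ιCostructuredArrow (G ⋙ F) c₀ ⋙
        CostructuredArrow.map₂ (F := pre F G) (U := forget F) (𝟙 _) (𝟙 (G.obj c₀)) ≅
      ιCostructuredArrow F (G.obj c₀) :=
  NatIso.ofComponents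
    (fun _ => CostructuredArrow.isoMk (Iso.refl _) (by
      show 𝟙 _ ≫ 𝟙 _ = 𝟙 _ ≫ G.map (𝟙 c₀) ≫ 𝟙 _
      simp))
    fun φ => CostructuredArrow.hom_ext _ _
      ((Category.comp_id _).trans ((pre_map_ι_map G φ).trans (Category.id_comp _).symm))

instance final_map₂_pre (G : C₀ ⥤ C) (c₀ : C₀) :
    (CostructuredArrow.map₂ (S := forget (G ⋙ F)) (F := pre F G) (U := forget F) (G := G)
      (𝟙 _) (𝟙 (G.obj c₀))).Final :=
  have := Functor.final_of_natIso (ιCostructuredArrowCompMap₂PreIso (F := F) G c₀).symm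
  Functor.final_of_final_comp (ιCostructuredArrow (G ⋙ F) c₀) _

end CategoryTheory.Grothendieck

theorem grothendieck_beck_chevalley
    {C C₀ : Type u} [SmallCategory C] [SmallCategory C₀]
    (F : C ⥤ Cat.{u, u}) (G : C₀ ⥤ C)
    {Z : Type v} [Category.{u} Z] [HasColimits Z] (H : Grothendieck F ⥤ Z) :
    ∃ hsq : Grothendieck.forget (G ⋙ F) ⋙ G = Grothendieck.pre F G ⋙ Grothendieck.forget F,
      IsIso
        (Functor.descOfIsLeftKanExtension
          ((Grothendieck.forget (G ⋙ F)).lan.obj (Grothendieck.pre F G ⋙ H))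
          ((Grothendieck.forget (G ⋙ F)).lanUnit.app (Grothendieck.pre F G ⋙ H))
          (G ⋙ (Grothendieck.forget F).lan.obj H)
          (Functor.whiskerLeft (Grothendieck.pre F G) ((Grothendieck.forget F).lanUnit.app H) ≫
            eqToHom (by
              show Grothendieck.pre F G ⋙
                    (Grothendieck.forget F ⋙ (Grothendieck.forget F).lan.obj H) =
                  (Grothendieck.forget (G ⋙ F) ⋙ G) ⋙ (Grothendieck.forget F).lan.obj H
              rw [← Functor.assoc, ← hsq]))) := by
  refine ⟨rfl, ?_⟩
  rw [← Functor.isLeftKanExtension_iff_isIso _ _ _ (Functor.descOfIsLeftKanExtension_fac _ _ _ _)]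
  refine Functor.isLeftKanExtension_comp_of_final (L₀ := Grothendieck.forget (G ⋙ F)) (G := G)
    ((Grothendieck.forget F).lanUnit.app H) (𝟙 (Grothendieck.pre F G ⋙ Grothendieck.forget F)) _ ?_
  erw [Functor.whiskerRight_id', Category.comp_id]
end

section
/- Let F : K ⥤ Cat be a functor and let y be an object of K. The canonical functor from F.obj y to the comma category CostructuredArrow (Grothendieck.forget F) y, sending an object a of F.obj y to the pair ((y, a), 𝟙 y), is final. -/
/-!
Let `F : K ⥤ Cat` be a functor and let `y` be an object of `K`.  The canonical functor from
`F.obj y` to the comma category `CostructuredArrow (Grothendieck.forget F) y`, sending an object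
`a` of `F.obj y` to the pair `((y, a), 𝟙 y)`, is final.
-/

universe v₁ u₁

open CategoryTheory

/-- The canonical functor `F.obj y ⥤ CostructuredArrow (Grothendieck.forget F) y` sending an
object `a` of `F.obj y` to `((y, a), 𝟙 y)`. -/
def grothendieckFiberToCostructuredArrow {K : Type u₁} [Category.{v₁} K]
    (F : K ⥤ Cat) (y : K) :
    F.obj y ⥤ CostructuredArrow (Grothendieck.forget F) y where
  obj a := CostructuredArrow.mk (Y := (Grothendieck.ι F y).obj a) (𝟙 y)
  map f := CostructuredArrow.homMk ((Grothendieck.ι F y).map f) (by first | exact Category.id_comp _ | (simp [Grothendieck.forget]; exact Category.id_comp _))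
  map_id a := by
    apply CostructuredArrow.hom_ext
    show (Grothendieck.ι F y).map (𝟙 a) = 𝟙 ((Grothendieck.ι F y).obj a)
    exact (Grothendieck.ι F y).map_id a
  map_comp f g := by
    apply CostructuredArrow.hom_ext
    simp only [CostructuredArrow.homMk_left, CostructuredArrow.comp_left, Functor.map_comp]
    rfl

/-! Under `d = ((x, a), f : x ⟶ y)` the comma category of the fiber inclusion has an initial
object: the cocartesian pushforward `(F.map f).obj a`, reached from `d` by the arrow `(f, 𝟙)`.
Indeed a morphism `(x, a) ⟶ (y, b)` of the Grothendieck construction over `f` is just a fiber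
morphism `(F.map f).obj a ⟶ b`, and it factors uniquely as `(f, 𝟙)` followed by that fiber
morphism. -/

namespace CategoryTheory.Grothendieck

variable {K : Type u₁} [Category.{v₁} K] {F : K ⥤ Cat}

lemma hom_eq_mk {X Y : Grothendieck F} (g : X ⟶ Y) {f : X.base ⟶ Y.base} (h : g.base = f) :
    g = Hom.mk f (eqToHom (by rw [h]) ≫ g.fiber) := by
  subst h
  simp only [eqToHom_refl, Category.id_comp]
  rfl

lemma ιNatTrans_app_comp_ι_map {x c : K} (f : x ⟶ c) {a : F.obj x} {b : F.obj c}
    (φ : (F.map f).toFunctor.obj a ⟶ b) :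
    (ιNatTrans f).app a ≫ (ι F c).map φ = Hom.mk f φ := by
  fapply Grothendieck.ext
  · exact Category.comp_id f
  · dsimp [ι]
    erw [(F.map (𝟙 c)).toFunctor.map_id, Category.id_comp, eqToHom_trans_assoc,
      eqToHom_trans_assoc, eqToHom_refl, Category.id_comp]

end CategoryTheory.Grothendieck

namespace CategoryTheory.grothendieckFiberToCostructuredArrow

open Grothendieck Limits

variable {K : Type u₁} [Category.{v₁} K] {F : K ⥤ Cat} {y : K}
  {d : CostructuredArrow (Grothendieck.forget F) y}

lemma hom_left_base {b : F.obj y} (g : d ⟶ (grothendieckFiberToCostructuredArrow F y).obj b) :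
    g.left.base = d.hom :=
  (Category.comp_id _).symm.trans (CostructuredArrow.w g)

variable (d) in
def pushforward : StructuredArrow d (grothendieckFiberToCostructuredArrow F y) :=
  StructuredArrow.mk (Y := (F.map d.hom).toFunctor.obj d.left.fiber)
    (CostructuredArrow.homMk ((ιNatTrans d.hom).app d.left.fiber) (Category.comp_id _))

lemma pushforward_hom_comp_map_eq_iff {b : F.obj y} (u : (pushforward d).right ⟶ b)
    (g : d ⟶ (grothendieckFiberToCostructuredArrow F y).obj b) :
    (pushforward d).hom ≫ (grothendieckFiberToCostructuredArrow F y).map u = g ↔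
      Hom.mk d.hom u = g.left := by
  have hleft : ((pushforward d).hom ≫ (grothendieckFiberToCostructuredArrow F y).map u).left =
      Hom.mk d.hom u :=
    ιNatTrans_app_comp_ι_map d.hom u
  exact ⟨fun h => hleft.symm.trans (congrArg CommaMorphism.left h),
    fun h => CostructuredArrow.hom_ext _ _ (hleft.trans h)⟩

variable (d) in
def isInitialPushforward : IsInitial (pushforward d) :=
  IsInitial.ofUniqueHom
    (fun X => StructuredArrow.homMk (eqToHom (by rw [hom_left_base]; rfl) ≫ X.hom.left.fiber)
      ((pushforward_hom_comp_map_eq_iff _ _).2 (hom_eq_mk _ (hom_left_base _)).symm))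
    (fun X m => by
      ext
      have h := (pushforward_hom_comp_map_eq_iff _ _).1 (StructuredArrow.w m)
      rw [hom_eq_mk X.hom.left (hom_left_base _)] at h
      exact eq_of_heq (Hom.mk.inj h).2)

end CategoryTheory.grothendieckFiberToCostructuredArrow

theorem grothendieckFiberToCostructuredArrow_final {K : Type u₁} [Category.{v₁} K]
    (F : K ⥤ Cat) (y : K) :
    (grothendieckFiberToCostructuredArrow F y).Final :=
  ⟨fun d => isConnected_of_isInitial _
    (grothendieckFiberToCostructuredArrow.isInitialPushforward d)⟩
end

section
/- Let F : K ⥤ Cat be a functor, Z a cocomplete category, and H : Grothendieck F ⥤ Z a functor. For every object k of K, the value at k of the pointwise left Kan extension of H along Grothendieck.forget F is naturally isomorphic to the colimit of Grothendieck.ι F k ⋙ H (the restriction of H to the fiber F.obj k). -/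
/-!
The value of the pointwise left Kan extension at `k` is the colimit of `H` over the comma
category `CostructuredArrow (Grothendieck.forget F) k`. The fiber `F.obj k` sits in that comma
category as a reflective subcategory: `(x, f : x.base ⟶ k)` is sent to the transport
`(F.map f).obj x.fiber`, and `x ⟶ x.transport f` is universal among maps into the fiber.
Right adjoints are final, so the colimit may be computed over the fiber alone.
-/

universe v u

open CategoryTheory CategoryTheory.Limits

lemma CategoryTheory.Functor.eqToHom_comp_comp_eq_map_of_eq_id {D : Type*} [Category D]
    {G : D ⥤ D} (hG : G = 𝟭 D) {A₀ A B Y : D} (ψ : A ⟶ B) (g : B ⟶ Y) (p : A₀ = A)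
    (q : A₀ = G.obj A) (r : G.obj B = B) :
    eqToHom p ≫ ψ ≫ g = eqToHom q ≫ G.map ψ ≫ eqToHom r ≫ g := by
  subst hG
  simp

namespace CategoryTheory.Grothendieck

variable {C : Type*} [Category C] (F : C ⥤ Cat) (c : C)

@[simps! obj_left obj_hom map_left]
def ιToCostructuredArrow : F.obj c ⥤ CostructuredArrow (forget F) c :=
  (ι F c).toCostructuredArrow (forget F) c (fun _ => 𝟙 c) (fun _ => Category.comp_id _)

variable {F c}

lemma left_base_of_hom_ιToCostructuredArrow_obj {X : CostructuredArrow (forget F) c}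
    {b : F.obj c} (φ : X ⟶ (ιToCostructuredArrow F c).obj b) : φ.left.base = X.hom :=
  (Category.comp_id _).symm.trans (CostructuredArrow.w φ)

variable (F c) in
def costructuredArrowHomEquiv (X : CostructuredArrow (forget F) c) (b : F.obj c) :
    ((F.map X.hom).toFunctor.obj X.left.fiber ⟶ b) ≃ (X ⟶ (ιToCostructuredArrow F c).obj b) where
  toFun ψ := CostructuredArrow.homMk ⟨X.hom, ψ⟩ (Category.comp_id _)
  invFun φ := eqToHom (congrArg (fun f => (F.map f).toFunctor.obj X.left.fiber)
    (left_base_of_hom_ιToCostructuredArrow_obj φ).symm) ≫ φ.left.fiber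
  left_inv := Category.id_comp
  right_inv φ := by
    refine CostructuredArrow.hom_ext _ _ (Grothendieck.ext _ _ ?_ ?_)
    · exact (left_base_of_hom_ιToCostructuredArrow_obj φ).symm
    · exact (eqToHom_trans_assoc _ _ _).trans
        ((congrArg (· ≫ _) (eqToHom_refl _ _)).trans (Category.id_comp _))

lemma costructuredArrowHomEquiv_comp (X : CostructuredArrow (forget F) c) {b b' : F.obj c}
    (ψ : (F.map X.hom).toFunctor.obj X.left.fiber ⟶ b) (g : b ⟶ b') :
    costructuredArrowHomEquiv F c X b' (ψ ≫ g) =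
      costructuredArrowHomEquiv F c X b ψ ≫ (ιToCostructuredArrow F c).map g :=
  CostructuredArrow.hom_ext _ _ (Grothendieck.ext _ _ (Category.comp_id _).symm
    (Functor.eqToHom_comp_comp_eq_map_of_eq_id (congrArg Cat.Hom.toFunctor (F.map_id c))
      _ _ _ _ _))

variable (F c)

def costructuredArrowToFiber : CostructuredArrow (forget F) c ⥤ F.obj c :=
  Adjunction.leftAdjointOfEquiv (costructuredArrowHomEquiv F c)
    fun X _ _ g ψ => costructuredArrowHomEquiv_comp X ψ g

def costructuredArrowToFiberAdjunction :
    costructuredArrowToFiber F c ⊣ ιToCostructuredArrow F c :=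
  Adjunction.adjunctionOfEquivLeft _ _

instance final_ιToCostructuredArrow : (ιToCostructuredArrow F c).Final :=
  Functor.final_of_adjunction (costructuredArrowToFiberAdjunction F c)

end CategoryTheory.Grothendieck

theorem grothendieck_pointwiseLeftKanExtension_obj_iso_colimit_fiber
    {K : Type u} [SmallCategory K] (F : K ⥤ Cat.{u, u})
    {Z : Type v} [Category.{u} Z] [HasColimits Z] (H : Grothendieck F ⥤ Z) (k : K) :
    Nonempty (((Grothendieck.forget F).pointwiseLeftKanExtension H).obj k ≅
      colimit (Grothendieck.ι F k ⋙ H)) :=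
  -- `ιToCostructuredArrow F k ⋙ CostructuredArrow.proj _ k` is `ι F k` by definition.
  ⟨(Functor.Final.colimitIso (Grothendieck.ιToCostructuredArrow F k)
      (CostructuredArrow.proj (Grothendieck.forget F) k ⋙ H)).symm⟩
end
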